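/- arXiv:2208.02535 — 3 statements merged into one kernel-verified Lean document; each statement's English description precedes it below -/
import Mathlib

section
/- Let p be a prime number, n < p-1 a natural number, and (A,+,∘) a left brace of cardinality p^n. Then the pre-Lie ring (A/ann(p^2), +, •) is left nilpotent; in fact [b_1]•([b_2]•(⋯([b_n]•[b_{n+1}])⋯)) = 0 for all b_1, …, b_{n+1} ∈ A. -/
universe u

/-- A left brace: `(A,+)` abelian group, `(A,∘)` a group, with
`a∘(b+c)+a = a∘b+a∘c`. -/
structure LeftBrace (A : Type u) [AddCommGroup A] where
  circ : A → A → A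
  one : A
  inv : A → A
  circ_assoc : ∀ a b c : A, circ (circ a b) c = circ a (circ b c)
  one_circ : ∀ a : A, circ one a = a
  circ_one : ∀ a : A, circ a one = a
  inv_circ : ∀ a : A, circ (inv a) a = one
  circ_add : ∀ a b c : A, circ a (b + c) + a = circ a b + circ a c

/-- `a*b = a∘b - a - b`. -/
def LeftBrace.star {A : Type u} [AddCommGroup A] (B : LeftBrace A) (a b : A) : A :=
  B.circ a b - a - b

/-- `ann(k) = {a : k•a = 0}`, as an additive subgroup. -/
def annSub (A : Type u) [AddCommGroup A] (k : ℕ) : AddSubgroup A where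
  carrier := {a : A | k • a = 0}
  zero_mem' := by simp
  add_mem' := by
    intro a b ha hb
    have ha' : k • a = 0 := ha
    have hb' : k • b = 0 := hb
    show k • (a + b) = 0
    rw [smul_add, ha', hb', add_zero]
  neg_mem' := by
    intro a ha
    have ha' : k • a = 0 := ha
    show k • (-a) = 0
    rw [smul_neg, ha', neg_zero]

/-- The coset `[a]` of `a` in `A/ann(k)`. -/
def qmk {A : Type u} [AddCommGroup A] (k : ℕ) (a : A) : A ⧸ annSub A k :=
  QuotientAddGroup.mk a

/-- Evaluation of a non-associative word under a binary operation `op`,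
substituting `f i` for the variable `i`. -/
def wEval {α : Type*} {β : Type*} (op : β → β → β) (f : α → β) : FreeMagma α → β
  | FreeMagma.of a => f a
  | FreeMagma.mul x y => op (wEval op f x) (wEval op f y)

/-- The list of leaves (occurrences of variables, left to right) of a word. -/
def wLeaves {α : Type*} : FreeMagma α → List α
  | FreeMagma.of a => [a]
  | FreeMagma.mul x y => wLeaves x ++ wLeaves y

/-- The last (rightmost) variable of a word. -/
def wLast {α : Type*} : FreeMagma α → α
  | FreeMagma.of a => a
  | FreeMagma.mul _ y => wLast y

/-- The number of occurrences of the variable `a` in a word. -/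
def wCount {α : Type*} [DecidableEq α] (a : α) : FreeMagma α → ℕ
  | FreeMagma.of b => if b = a then 1 else 0
  | FreeMagma.mul x y => wCount a x + wCount a y

/-- The length (number of variable occurrences) of a word. -/
def wLen {α : Type*} : FreeMagma α → ℕ
  | FreeMagma.of _ => 1
  | FreeMagma.mul x y => wLen x + wLen y

/-- Left-normed product `a₁·(a₂·(⋯(aₘ·b)⋯))`. -/
def leftProd {Q : Type*} (mul : Q → Q → Q) : List Q → Q → Q
  | [], b => b
  | a :: l, b => mul a (leftProd mul l b)

/-- `circPow B a k` is the product of `k` copies of `a` under `∘`. -/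
def circPow {A : Type u} [AddCommGroup A] (B : LeftBrace A) (a : A) : ℕ → A
  | 0 => B.one
  | k + 1 => B.circ a (circPow B a k)

/-- `eSeq B a (i-1)` is `a_i`, where `a_1 = a` and `a_{i+1} = a * a_i`. -/
def eSeq {A : Type u} [AddCommGroup A] (B : LeftBrace A) (a : A) : ℕ → A
  | 0 => a
  | i + 1 => B.star a (eSeq B a i)

/-- `starIter B a b (i-1)` is `e_i`, where `e_1 = a*b` and `e_{i+1} = a*e_i`. -/
def starIter {A : Type u} [AddCommGroup A] (B : LeftBrace A) (a b : A) : ℕ → A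
  | 0 => B.star a b
  | i + 1 => B.star a (starIter B a b i)

/-- `iterOp op u v i` is `u ⊙ (u ⊙ (⋯ (u ⊙ v)))` with `i` applications of `u ⊙ ·`. -/
def iterOp {Q : Type*} (op : Q → Q → Q) (u v : Q) : ℕ → Q
  | 0 => v
  | i + 1 => op u (iterOp op u v i)

/-- `f(a) = Σ_{i=1}^{p−1} (C(p−1,i−1)/i)·e_i` where `e_1 = a`, `e_{i+1} = a*e_i`. -/
def fMap {A : Type u} [AddCommGroup A] (B : LeftBrace A) (p : ℕ) (a : A) : A :=
  ∑ i ∈ Finset.Icc 1 (p - 1), (Nat.choose (p - 1) (i - 1) / i) • eSeq B a (i - 1)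

/-- `braceChainAux B (i-1)` is `A^i`: `A^1 = A`, `A^{i+1}` the additive subgroup
generated by `{x*y : x ∈ A, y ∈ A^i}`. -/
def braceChainAux {A : Type u} [AddCommGroup A] (B : LeftBrace A) : ℕ → AddSubgroup A
  | 0 => ⊤
  | i + 1 => AddSubgroup.closure {z : A | ∃ x : A, ∃ y ∈ braceChainAux B i, z = B.star x y}

/-- `dSeq B a b i = (d_i, d_i')`: `d_0 = a`, `d_0' = b`, `d_{i+1} = d_i + d_i'`,
`d_{i+1}' = d_i * d_i'`. -/
def dSeq {A : Type u} [AddCommGroup A] (B : LeftBrace A) (a b : A) : ℕ → A × A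
  | 0 => (a, b)
  | i + 1 => ((dSeq B a b i).1 + (dSeq B a b i).2, B.star (dSeq B a b i).1 (dSeq B a b i).2)

/-!
Let `A₀ = A` and let `Aₖ₊₁` be the additive subgroup generated by the products `x * y` with
`y ∈ Aₖ` (this is `braceChainAux B k`). In the semidirect product `(A, +) ⋊ (A, ∘)`, with `(A, ∘)`
acting through `λ_g x = g ∘ x - g`, the product `g * y = λ_g y - y` is a commutator; this `p`-group
is nilpotent, so the chain reaches `0`, and as it decreases strictly until then, `Aₙ = 0`.

The heart of the proof is `(p • a) * b ∈ p • Aⱼ₊₁` for `b ∈ Aⱼ`. Write `λ_a = 1 + σ` with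
`σ = a * ·`; for `a ∈ Aₘ` and `u = a^{∘p}`, the binomial theorem gives
`λ_u = (1 + σ)ᵖ ≡ 1 + σᵖ (mod p)` and `u = ∑_{i<p} C(p, i+1) σⁱ a ≡ p • a + σᵖ⁻¹ a` modulo
`p • Aₘ₊₁`, where `σᵖ⁻¹ a = 0` and `σᵖ b = 0` because `n < p`. Hence `p • a = u ∘ (p • x)` with
`x ∈ Aₘ₊₁`, and the identity `(p • a) * b = λ_u ((p • x) * b) + (λ_u b - b)` yields the claim by
downward induction on `m`. Consequently `⊙`, and with it `•`, maps `[Aⱼ]` into `[Aⱼ₊₁]`, so an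
`n`-fold left product lies in `[Aₙ] = 0`.
-/

open Finset

theorem sum_range_add_one_pow {R : Type*} [Semiring R] (x : R) (k : ℕ) :
    ∑ j ∈ range k, (x + 1) ^ j = ∑ i ∈ range k, k.choose (i + 1) • x ^ i := by
  induction k with
  | zero => simp
  | succ k ih =>
    have hpow : (x + 1) ^ k = ∑ i ∈ range (k + 1), k.choose i • x ^ i := by
      rw [(Commute.one_right x).add_pow]
      refine sum_congr rfl fun i _ => ?_
      rw [one_pow, mul_one, nsmul_eq_mul, Nat.cast_comm]
    simp only [Nat.choose_succ_succ', add_smul, sum_add_distrib]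
    rw [sum_range_succ, ih, hpow, sum_range_succ (fun i => k.choose (i + 1) • x ^ i),
      Nat.choose_succ_self, zero_smul, add_zero, add_comm]

theorem AddSubgroup.chain_eq_bot_of_card_eq_prime_pow {G : Type*} [AddGroup G] {p n : ℕ}
    (hp : p.Prime) (hG : Nat.card G = p ^ n) (H : ℕ → AddSubgroup G) (h0 : H 0 = ⊤)
    (hH : ∀ k, H (k + 1) < H k ∨ H (k + 1) = ⊥) : H n = ⊥ := by
  have : Finite G := Nat.finite_of_card_ne_zero (by rw [hG]; exact pow_ne_zero _ hp.ne_zero)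
  have hdvd : ∀ k, Nat.card (H k) ∣ p ^ (n - k) := by
    intro k
    induction k with
    | zero => rw [h0, AddSubgroup.card_top, hG, Nat.sub_zero]
    | succ k ih =>
      rcases hH k with hlt | hbot
      · have hle := AddSubgroup.card_dvd_of_le hlt.le
        obtain ⟨i, hin, hi⟩ := (Nat.dvd_prime_pow hp).1 ih
        obtain ⟨j, -, hj⟩ := (Nat.dvd_prime_pow hp).1 (hle.trans ih)
        rw [hi, hj, Nat.pow_dvd_pow_iff_le_right hp.one_lt] at hle
        have hji : j ≠ i := by
          rintro rfl
          exact hlt.ne (AddSubgroup.eq_of_le_of_card_ge hlt.le (hi ▸ hj ▸ le_rfl))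
        rw [hj]
        exact pow_dvd_pow p (by omega)
      · rw [hbot, AddSubgroup.card_bot]
        exact one_dvd _
  rw [← AddSubgroup.card_eq_one, ← Nat.dvd_one, ← pow_zero p, ← Nat.sub_self n]
  exact hdvd n

theorem leftProd_mem {Q : Type*} {mul : Q → Q → Q} {S : ℕ → Set Q}
    (hmul : ∀ j x y, y ∈ S j → mul x y ∈ S (j + 1)) (l : List Q) {j : ℕ} {y : Q}
    (hy : y ∈ S j) : leftProd mul l y ∈ S (j + l.length) := by
  induction l with
  | nil => exact hy
  | cons x l ih =>
    rw [List.length_cons, ← add_assoc]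
    exact hmul _ x _ ih

namespace LeftBrace

variable {A : Type u} [AddCommGroup A] (B : LeftBrace A)

theorem circ_add' (g x y : A) : B.circ g (x + y) = B.circ g x + B.circ g y - g :=
  eq_sub_of_add_eq (B.circ_add g x y)

theorem circ_sub (g x y : A) : B.circ g (x - y) = B.circ g x + g - B.circ g y :=
  eq_sub_of_add_eq (by rw [← B.circ_add, sub_add_cancel])

theorem circ_zero (a : A) : B.circ a 0 = a := by
  simpa using B.circ_sub a 0 0

theorem one_eq_zero : B.one = 0 := by
  simpa only [B.one_circ] using (B.circ_zero B.one).symm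

structure CircGroup (B : LeftBrace A) : Type u where
  val : A

instance : Group B.CircGroup :=
  letI : Mul B.CircGroup := ⟨fun g h => ⟨B.circ g.val h.val⟩⟩
  letI : One B.CircGroup := ⟨⟨B.one⟩⟩
  letI : Inv B.CircGroup := ⟨fun g => ⟨B.inv g.val⟩⟩
  Group.ofLeftAxioms (fun _ _ _ => congrArg _ (B.circ_assoc _ _ _))
    (fun _ => congrArg _ (B.one_circ _)) (fun _ => congrArg _ (B.inv_circ _))

theorem circ_inv (g : A) : B.circ g (B.inv g) = B.one :=
  congrArg CircGroup.val (mul_inv_cancel (⟨g⟩ : B.CircGroup))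

def lam (g : A) : Module.End ℤ A :=
  (AddMonoidHom.mk' (fun x => B.circ g x - g) fun x y => by rw [B.circ_add']; abel).toIntLinearMap

theorem lam_apply (g x : A) : B.lam g x = B.circ g x - g := rfl

theorem circ_eq_lam_add (g x : A) : B.circ g x = B.lam g x + g := by
  rw [lam_apply, sub_add_cancel]

theorem star_eq_lam_sub (a b : A) : B.star a b = B.lam a b - b := rfl

theorem lam_one : B.lam B.one = 1 := by
  ext x
  rw [lam_apply, B.one_circ, B.one_eq_zero, sub_zero, Module.End.one_apply]

theorem lam_circ (g h : A) : B.lam (B.circ g h) = B.lam g * B.lam h := by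
  ext x
  rw [Module.End.mul_apply, lam_apply, lam_apply, lam_apply, B.circ_assoc, B.circ_sub]
  abel

theorem lam_lam_inv (g x : A) : B.lam g (B.lam (B.inv g) x) = x := by
  rw [← Module.End.mul_apply, ← lam_circ, circ_inv, lam_one, Module.End.one_apply]

theorem star_circ (g x b : A) : B.star (B.circ g x) b = B.lam g (B.star x b) + B.star g b := by
  rw [star_eq_lam_sub, star_eq_lam_sub, star_eq_lam_sub, lam_circ, Module.End.mul_apply, map_sub]
  abel

theorem star_zero_left (b : A) : B.star 0 b = 0 := by
  have h : B.star B.one b = 0 := by rw [star_eq_lam_sub, lam_one, Module.End.one_apply, sub_self]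
  rwa [B.one_eq_zero] at h

def starEnd (a : A) : Module.End ℤ A := B.lam a - 1

theorem starEnd_apply (a b : A) : B.starEnd a b = B.star a b := rfl

theorem lam_eq_starEnd_add_one (a : A) : B.lam a = B.starEnd a + 1 := (sub_add_cancel _ _).symm

theorem braceChainAux_succ (i : ℕ) : braceChainAux B (i + 1) =
    AddSubgroup.closure {z | ∃ x, ∃ y ∈ braceChainAux B i, z = B.star x y} := rfl

theorem star_mem_braceChainAux (x : A) {y : A} {i : ℕ} (hy : y ∈ braceChainAux B i) :
    B.star x y ∈ braceChainAux B (i + 1) :=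
  AddSubgroup.subset_closure ⟨x, y, hy, rfl⟩

theorem braceChainAux_antitone : Antitone (braceChainAux B) := by
  refine antitone_nat_of_succ_le fun i => ?_
  induction i with
  | zero => exact le_top
  | succ i ih =>
    rw [braceChainAux_succ, AddSubgroup.closure_le]
    rintro _ ⟨x, y, hy, rfl⟩
    exact B.star_mem_braceChainAux x (ih hy)

theorem lam_mem_braceChainAux (g : A) {x : A} {i : ℕ} (hx : x ∈ braceChainAux B i) :
    B.lam g x ∈ braceChainAux B i := by
  cases i with
  | zero => exact AddSubgroup.mem_top _
  | succ i =>
    suffices h : braceChainAux B (i + 1) ≤ (braceChainAux B (i + 1)).comap (B.lam g).toAddMonoidHom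
      from h hx
    rw [braceChainAux_succ, AddSubgroup.closure_le]
    rintro _ ⟨u, y, hy, rfl⟩
    have h : B.lam g (B.star u y) = B.star (B.circ g u) y - B.star g y := by
      rw [star_circ]; abel
    simp only [SetLike.mem_coe, AddSubgroup.mem_comap, LinearMap.toAddMonoidHom_coe, h]
    exact sub_mem (B.star_mem_braceChainAux _ hy) (B.star_mem_braceChainAux _ hy)

theorem starEnd_pow_mem_braceChainAux (a : A) {b : A} {j : ℕ} (hb : b ∈ braceChainAux B j)
    (i : ℕ) : (B.starEnd a ^ i) b ∈ braceChainAux B (j + i) := by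
  induction i with
  | zero => exact hb
  | succ i ih =>
    rw [pow_succ', Module.End.mul_apply, starEnd_apply]
    exact B.star_mem_braceChainAux a ih

theorem lam_circPow (a : A) (k : ℕ) : B.lam (circPow B a k) = B.lam a ^ k := by
  induction k with
  | zero => exact B.lam_one
  | succ k ih => rw [circPow, lam_circ, ih, pow_succ']

theorem circPow_eq_sum_choose (a : A) (k : ℕ) :
    circPow B a k = ∑ i ∈ range k, k.choose (i + 1) • (B.starEnd a ^ i) a := by
  have h : circPow B a k = ∑ j ∈ range k, (B.lam a ^ j) a := by
    induction k with
    | zero => rw [sum_range_zero, ← B.one_eq_zero]; rfl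
    | succ k ih =>
      rw [circPow, circ_eq_lam_add, ih, map_sum, sum_range_succ']
      simp only [pow_succ', Module.End.mul_apply, pow_zero, Module.End.one_apply]
  rw [h, ← LinearMap.sum_apply, lam_eq_starEnd_add_one, sum_range_add_one_pow,
    LinearMap.sum_apply]
  simp only [LinearMap.smul_apply]

section Semidirect

open SemidirectProduct
open scoped commutatorElement

instance : MulDistribMulAction B.CircGroup (Multiplicative A) where
  smul g y := .ofAdd (B.lam g.val y.toAdd)
  one_smul y := congrArg (fun f => Multiplicative.ofAdd (f y.toAdd)) B.lam_one
  mul_smul g h y := congrArg (fun f => Multiplicative.ofAdd (f y.toAdd)) (B.lam_circ g.val h.val)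
  smul_mul g _ _ := map_add (B.lam g.val) _ _
  smul_one g := map_zero (B.lam g.val)

abbrev Semidirect : Type u :=
  Multiplicative A ⋊[MulDistribMulAction.toMulAut B.CircGroup (Multiplicative A)] B.CircGroup

theorem inl_star (g y : A) : (inl (.ofAdd (B.star g y)) : B.Semidirect) =
    ⁅(inr ⟨g⟩ : B.Semidirect), inl (.ofAdd y)⁆ := by
  rw [commutatorElement_def, ← map_inv inr, ← inl_aut, ← map_inv inl, ← map_mul,
    star_eq_lam_sub, sub_eq_add_neg]
  rfl

theorem inl_mem_lowerCentralSeries {k : ℕ} {y : A} (hy : y ∈ braceChainAux B k) :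
    (inl (.ofAdd y) : B.Semidirect) ∈ (⊤ : Subgroup B.Semidirect).lowerCentralSeries k := by
  induction k generalizing y with
  | zero => exact Subgroup.mem_top _
  | succ k ih =>
    rw [braceChainAux_succ] at hy
    induction hy using AddSubgroup.closure_induction with
    | mem _ h =>
      obtain ⟨g, y, hy, rfl⟩ := h
      rw [inl_star, Subgroup.lowerCentralSeries_succ, Subgroup.commutator_comm]
      exact Subgroup.commutator_mem_commutator (Subgroup.mem_top _) (ih hy)
    | zero => exact one_mem _
    | add _ _ _ _ h₁ h₂ =>
      rw [ofAdd_add, map_mul]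
      exact mul_mem h₁ h₂
    | neg _ _ h =>
      rw [ofAdd_neg, map_inv]
      exact inv_mem h

theorem exists_braceChainAux_eq_bot {p n : ℕ} (hp : p.Prime) (hcard : Nat.card A = p ^ n) :
    ∃ k, braceChainAux B k = ⊥ := by
  have : Fact p.Prime := ⟨hp⟩
  have hcardP : Nat.card B.Semidirect = p ^ (n + n) := by
    rw [SemidirectProduct.card, pow_add, ← hcard, Nat.card_congr Multiplicative.toAdd,
      Nat.card_congr ⟨CircGroup.val, CircGroup.mk, fun _ => rfl, fun _ => rfl⟩]
  have : Finite B.Semidirect :=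
    Nat.finite_of_card_ne_zero (by rw [hcardP]; exact pow_ne_zero _ hp.ne_zero)
  obtain ⟨k, hk⟩ :=
    Subgroup.nilpotent_iff_lowerCentralSeries.mp (IsPGroup.of_card hcardP).isNilpotent
  refine ⟨k, (AddSubgroup.eq_bot_iff_forall _).2 fun y hy => ?_⟩
  have h := B.inl_mem_lowerCentralSeries hy
  rwa [hk, Subgroup.mem_bot, ← map_one inl, inl_inj,
    ofAdd_eq_one] at h

end Semidirect

theorem braceChainAux_add_eq {k : ℕ} (h : braceChainAux B (k + 1) = braceChainAux B k)
    (m : ℕ) : braceChainAux B (k + m) = braceChainAux B k := by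
  induction m with
  | zero => rfl
  | succ m ih => rw [← add_assoc, braceChainAux_succ, ih, ← braceChainAux_succ, h]

theorem braceChainAux_eq_bot {p n : ℕ} (hp : p.Prime) (hcard : Nat.card A = p ^ n) :
    braceChainAux B n = ⊥ := by
  obtain ⟨N, hN⟩ := B.exists_braceChainAux_eq_bot hp hcard
  refine AddSubgroup.chain_eq_bot_of_card_eq_prime_pow hp hcard _ rfl fun k => ?_
  refine (braceChainAux_antitone B k.le_succ).lt_or_eq.imp id fun h => ?_
  rw [h, ← B.braceChainAux_add_eq h N, eq_bot_iff, ← hN]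
  exact braceChainAux_antitone B (by omega)

section

variable {B} {p n : ℕ} (hp : p.Prime) (hbot : braceChainAux B n = ⊥)
include hp hbot

theorem exists_circPow_prime_eq (hnp : n < p) {a : A} {m : ℕ}
    (ha : a ∈ braceChainAux B m) :
    ∃ h ∈ braceChainAux B (m + 1), circPow B a p = p • a + p • h := by
  obtain ⟨q, rfl⟩ : ∃ q, p = q + 2 := ⟨p - 2, by have := hp.two_le; omega⟩
  have hlast : (B.starEnd a ^ (q + 1)) a = 0 := by
    have h := braceChainAux_antitone B (by omega : n ≤ m + (q + 1))
      (B.starEnd_pow_mem_braceChainAux a ha (q + 1))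
    rwa [hbot, AddSubgroup.mem_bot] at h
  refine ⟨∑ i ∈ range q, ((q + 2).choose (i + 2) / (q + 2)) • (B.starEnd a ^ (i + 1)) a,
    AddSubgroup.sum_mem _ fun i _ => AddSubgroup.nsmul_mem _
      (braceChainAux_antitone B (by omega) (B.starEnd_pow_mem_braceChainAux a ha (i + 1))) _, ?_⟩
  rw [circPow_eq_sum_choose, sum_range_succ, hlast, smul_zero, add_zero, sum_range_succ',
    smul_sum, Nat.choose_one_right, pow_zero, Module.End.one_apply, add_comm]
  congr 1
  refine sum_congr rfl fun i hi => ?_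
  rw [smul_smul, Nat.mul_div_cancel' (hp.dvd_choose_self (by omega) (by simp at hi; omega))]

theorem exists_lam_circPow_prime_apply (hnp : n ≤ p) (a : A) {b : A} {j : ℕ}
    (hb : b ∈ braceChainAux B j) :
    ∃ s ∈ braceChainAux B (j + 1), B.lam (circPow B a p) b = b + p • s := by
  have hlast : (B.starEnd a ^ p) b = 0 := by
    have h := braceChainAux_antitone B (by omega : n ≤ j + p)
      (B.starEnd_pow_mem_braceChainAux a hb p)
    rwa [hbot, AddSubgroup.mem_bot] at h
  refine ⟨∑ k ∈ Ioo 0 p, (p.choose k / p) • (B.starEnd a ^ k) b,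
    AddSubgroup.sum_mem _ fun k hk => AddSubgroup.nsmul_mem _
      (braceChainAux_antitone B (by simp at hk; omega)
        (B.starEnd_pow_mem_braceChainAux a hb k)) _, ?_⟩
  rw [lam_circPow, lam_eq_starEnd_add_one, (Commute.one_right _).add_pow_prime_eq' hp]
  simp [hlast, smul_sum, smul_comm p]

theorem exists_star_nsmul_eq (hnp : n < p) (a : A) {b : A} {j : ℕ}
    (hb : b ∈ braceChainAux B j) :
    ∃ c ∈ braceChainAux B (j + 1), B.star (p • a) b = p • c := by
  suffices h : ∀ d m, n ≤ m + d → ∀ a ∈ braceChainAux B m,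
      ∃ c ∈ braceChainAux B (j + 1), B.star (p • a) b = p • c from
    h n 0 (by omega) a (AddSubgroup.mem_top a)
  intro d
  induction d with
  | zero =>
    intro m hm a ha
    have ha0 : a = 0 := AddSubgroup.mem_bot.mp (hbot ▸ braceChainAux_antitone B hm ha)
    exact ⟨0, zero_mem _, by rw [ha0, smul_zero, star_zero_left]⟩
  | succ d ih =>
    intro m hm a ha
    obtain ⟨h, hh, hu⟩ := exists_circPow_prime_eq hp hbot hnp ha
    obtain ⟨s, hs, hus⟩ := exists_lam_circPow_prime_apply hp hbot hnp.le a hb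
    set u := circPow B a p
    -- the decomposition `p • a = u ∘ (p • x)` with `x` one level deeper than `a`
    set x := -B.lam (B.inv u) h
    have hpa : B.circ u (p • x) = p • a := by
      rw [circ_eq_lam_add, map_nsmul, map_neg, lam_lam_inv, smul_neg, hu]
      abel
    obtain ⟨c, hc, hxc⟩ := ih (m + 1) (by omega) x (neg_mem (B.lam_mem_braceChainAux _ hh))
    refine ⟨B.lam u c + s, add_mem (B.lam_mem_braceChainAux u hc) hs, ?_⟩
    rw [← hpa, star_circ, hxc, star_eq_lam_sub, hus, map_nsmul, add_sub_cancel_left, smul_add]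

end

end LeftBrace

theorem stmt_1_general (p n : ℕ) (hp : p.Prime) (hn : n < p - 1)
    (A : Type u) [AddCommGroup A] (B : LeftBrace A) (hcard : Nat.card A = p ^ n)
    (γ : ℕ)
    (odot bullet :
      (A ⧸ annSub A (p ^ 2)) → (A ⧸ annSub A (p ^ 2)) → (A ⧸ annSub A (p ^ 2)))
    (hodot : ∀ a b c : A, p • c = B.star (p • a) b →
      odot (qmk (p ^ 2) a) (qmk (p ^ 2) b) = qmk (p ^ 2) c)
    (hbull : ∀ x y : A, bullet (qmk (p ^ 2) x) (qmk (p ^ 2) y) =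
      ∑ i ∈ Finset.range (p - 1), (γ ^ (p ^ (p - 1))) ^ (p - 1 - i) •
        odot (qmk (p ^ 2) ((γ ^ (p ^ (p - 1))) ^ i • x)) (qmk (p ^ 2) y)) :
    ∀ b : ℕ → A,
      leftProd bullet ((List.range n).map fun i => qmk (p ^ 2) (b i)) (qmk (p ^ 2) (b n))
        = 0 := by
  intro b
  have hbot := B.braceChainAux_eq_bot hp hcard
  let Q (j : ℕ) := (braceChainAux B j).map (QuotientAddGroup.mk' (annSub A (p ^ 2)))
  have hodot_mem : ∀ j x, ∀ y ∈ Q j, odot x y ∈ Q (j + 1) := by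
    rintro j x _ ⟨b, hb, rfl⟩
    obtain ⟨a, rfl⟩ := QuotientAddGroup.mk_surjective x
    obtain ⟨c, hc, hac⟩ := LeftBrace.exists_star_nsmul_eq hp hbot (by omega) a hb
    exact ⟨c, hc, (hodot a b c hac.symm).symm⟩
  have hbullet_mem : ∀ j x, ∀ y ∈ Q j, bullet x y ∈ Q (j + 1) := by
    rintro j x _ ⟨b, hb, rfl⟩
    obtain ⟨a, rfl⟩ := QuotientAddGroup.mk_surjective x
    rw [QuotientAddGroup.mk'_apply, ← qmk, ← qmk, hbull]
    exact sum_mem fun i _ => nsmul_mem (hodot_mem j _ _ ⟨b, hb, rfl⟩) _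
  have h := leftProd_mem (S := fun j => Q j) hbullet_mem
    ((List.range n).map fun i => qmk (p ^ 2) (b i)) (j := 0)
    (AddSubgroup.mem_map_of_mem _ (AddSubgroup.mem_top (b n)))
  rw [zero_add, List.length_map, List.length_range] at h
  simp only [Q, hbot, AddSubgroup.map_bot, SetLike.mem_coe, AddSubgroup.mem_bot] at h
  exact h

/-- the pre-Lie ring `(A/ann(p²),+,•)` is left nilpotent:
`[b₁]•([b₂]•(⋯([bₙ]•[b_{n+1}])⋯)) = 0` for all `b₁,…,b_{n+1} ∈ A`. -/
theorem stmt_1 (p n : ℕ) (hp : p.Prime) (hn : n < p - 1)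
    (A : Type u) [AddCommGroup A] (B : LeftBrace A) (hcard : Nat.card A = p ^ n)
    (γ : ℕ)
    (hγ : ∀ u : (ZMod (p ^ p))ˣ, ∃ k : ℕ, (γ : ZMod (p ^ p)) ^ k = (u : ZMod (p ^ p)))
    (odot bullet :
      (A ⧸ annSub A (p ^ 2)) → (A ⧸ annSub A (p ^ 2)) → (A ⧸ annSub A (p ^ 2)))
    (hodot : ∀ a b c : A, p • c = B.star (p • a) b →
      odot (qmk (p ^ 2) a) (qmk (p ^ 2) b) = qmk (p ^ 2) c)
    (hbull : ∀ x y : A, bullet (qmk (p ^ 2) x) (qmk (p ^ 2) y) =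
      ∑ i ∈ Finset.range (p - 1), (γ ^ (p ^ (p - 1))) ^ (p - 1 - i) •
        odot (qmk (p ^ 2) ((γ ^ (p ^ (p - 1))) ^ i • x)) (qmk (p ^ 2) y)) :
    ∀ b : ℕ → A,
      leftProd bullet ((List.range n).map fun i => qmk (p ^ 2) (b i)) (qmk (p ^ 2) (b n))
        = 0 :=
  stmt_1_general p n hp hn A B hcard γ odot bullet hodot hbull
end

section
/- Let (A,+,·) be a left nilpotent pre-Lie ring of cardinality p^n for a prime p and a natural number n < p-1. Let (A,+,∘) be the group of flows of (A,+,·), and let • be the operation on A/ann(p^2) constructed from the brace (A,+,∘) via ⊙ and ξ. Then for all x, y ∈ A: [x]•[y] = (p−1)·[x·y] in A/ann(p^2), where [x·y] denotes the product in the factor pre-Lie ring (A/ann(p^2),+,·). -/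
universe u

/-!
Put `s = p t`. Since `p ^ p` kills `A`, a sequence `f : ℕ → A` can be read as a power series
`Σ_D s^D f_D` in `s`, and products in `A` of such values as Cauchy products of sequences. The
equation `W(Ω(s x)) = s x` is then solved by a series `f` independent of `s`, with `f_0 = 0` and
`f_1 = x`: in degree `D`, `W(f) = f + Σ_{k ≥ 2} (1/k!) L_f^{k-1} f` involves `f_D` only through the
first summand, so the coefficients are found one at a time; on the finite set `A` the one-sided
inverse `Ω` of `W` is two-sided, hence `Ω(s x) = Σ_D s^D f_D`. Substituting into the formula for
`∘` gives `(s x) * y = Σ_D s^D r_D` with `r_0 = 0` and `r_1 = x·y`, so `[t x] ⊙ [y]` is the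
polynomial `Σ_D t^D [p^(D-1) r_D]` in `t`. Finally `ξ` is an element of order `p - 1` modulo
`p ^ p` whose powers `ξ^j`, `0 < j < p - 1`, are `≢ 1 (mod p)`; the sum defining `•` is then a
discrete Fourier coefficient, which keeps only the linear term, multiplied by `p - 1`.
-/

open Finset Function

section CoefficientSequences

variable {A : Type*} [AddCommGroup A] (M : A →+ A →+ A)

def cauchyProduct (f g : ℕ → A) : ℕ → A :=
  fun D => ∑ i ∈ range (D + 1), M (f i) (g (D - i))

def truncEval (s N : ℕ) : (ℕ → A) →+ A :=
  ∑ D ∈ range N, s ^ D • Pi.evalAddMonoidHom (fun _ => A) D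

variable {M}

lemma truncEval_apply (s N : ℕ) (f : ℕ → A) :
    truncEval s N f = ∑ D ∈ range N, s ^ D • f D := by
  simp [truncEval]

lemma truncEval_single {s N D : ℕ} (hD : D < N) (a : A) :
    truncEval s N (Pi.single D a) = s ^ D • a := by
  rw [truncEval_apply, sum_eq_single_of_mem D (mem_range.2 hD) fun e _ he => by simp [he]]
  simp

lemma truncEval_congr {s N : ℕ} {f g : ℕ → A} (h : Set.EqOn f g (Set.Iio N)) :
    truncEval s N f = truncEval s N g := by
  simp only [truncEval_apply]
  exact sum_congr rfl fun D hD => by rw [h (mem_range.1 hD)]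

lemma truncEval_comp (s N : ℕ) (φ : A →+ A) (f : ℕ → A) :
    truncEval s N (φ ∘ f) = φ (truncEval s N f) := by
  simp [truncEval_apply, map_sum, map_nsmul]

lemma pow_smul_eq_zero_of_le {s N D : ℕ} (hs : ∀ z : A, s ^ N • z = 0) (hD : N ≤ D) (z : A) :
    s ^ D • z = 0 := by
  rw [← Nat.sub_add_cancel hD, pow_add, mul_smul, hs, smul_zero]

lemma truncEval_cauchyProduct {s N : ℕ} (hs : ∀ z : A, s ^ N • z = 0) (f g : ℕ → A) :
    M (truncEval s N f) (truncEval s N g) = truncEval s N (cauchyProduct M f g) := by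
  have htrunc : ∀ d ∈ range N, ∑ e ∈ range N, s ^ (e + d) • M (f d) (g e)
      = ∑ e ∈ range (N - d), s ^ (e + d) • M (f d) (g e) := by
    intro d _
    rw [← sum_range_add_sum_Ico _ (Nat.sub_le N d), add_eq_left]
    refine sum_eq_zero fun e he => pow_smul_eq_zero_of_le hs ?_ _
    have := (mem_Ico.1 he).1
    omega
  simp only [truncEval_apply, cauchyProduct, map_sum, map_nsmul, AddMonoidHom.finsetSum_apply,
    AddMonoidHom.smul_apply, smul_sum, smul_smul, ← pow_add]
  rw [sum_comm, sum_congr rfl htrunc, ← sum_range_diag_flip]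
  refine sum_congr rfl fun D _ => sum_congr rfl fun i hi => ?_
  rw [Nat.sub_add_cancel (Nat.lt_succ_iff.1 (mem_range.1 hi))]

lemma truncEval_iterate_cauchyProduct {s N : ℕ} (hs : ∀ z : A, s ^ N • z = 0) (f g : ℕ → A)
    (k : ℕ) :
    (M (truncEval s N f))^[k] (truncEval s N g) = truncEval s N ((cauchyProduct M f)^[k] g) := by
  induction k with
  | zero => rfl
  | succ k ih => rw [iterate_succ_apply', iterate_succ_apply', ih, truncEval_cauchyProduct hs]

@[simp] lemma cauchyProduct_zero_right (f : ℕ → A) : cauchyProduct M f 0 = 0 := by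
  ext D
  simp [cauchyProduct]

lemma cauchyProduct_single_zero_apply_one {f : ℕ → A} (hf : f 0 = 0) (y : A) :
    cauchyProduct M f (Pi.single 0 y) 1 = M (f 1) y := by
  simp [cauchyProduct, sum_range_succ, hf]

lemma cauchyProduct_eqOn_right {f g g' : ℕ → A} {j : ℕ} (hf : f 0 = 0)
    (h : Set.EqOn g g' (Set.Iio j)) :
    Set.EqOn (cauchyProduct M f g) (cauchyProduct M f g') (Set.Iio (j + 1)) := by
  intro D hD
  refine sum_congr rfl fun i hi => ?_
  rcases Nat.eq_zero_or_pos i with rfl | hi0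
  · simp [hf]
  · rw [h (show D - i < j by simp at hD hi ⊢; omega)]

lemma cauchyProduct_eqOn_left {f f' g : ℕ → A} {j : ℕ} (hg : g 0 = 0)
    (h : Set.EqOn f f' (Set.Iio j)) :
    Set.EqOn (cauchyProduct M f g) (cauchyProduct M f' g) (Set.Iio (j + 1)) := by
  intro D hD
  refine sum_congr rfl fun i hi => ?_
  rcases eq_or_ne i D with rfl | hiD
  · simp [hg]
  · rw [h (show i < j by simp at hD hi ⊢; omega)]

lemma cauchyProduct_eqOn {f f' g g' : ℕ → A} {j : ℕ} (hf : f 0 = 0) (hg' : g' 0 = 0)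
    (hff' : Set.EqOn f f' (Set.Iio j)) (hgg' : Set.EqOn g g' (Set.Iio j)) :
    Set.EqOn (cauchyProduct M f g) (cauchyProduct M f' g') (Set.Iio (j + 1)) :=
  (cauchyProduct_eqOn_right hf hgg').trans (cauchyProduct_eqOn_left hg' hff')

lemma iterate_cauchyProduct_eqOn_zero {f g : ℕ → A} {j : ℕ} (hf : f 0 = 0)
    (hg : Set.EqOn g 0 (Set.Iio j)) (m : ℕ) :
    Set.EqOn ((cauchyProduct M f)^[m] g) 0 (Set.Iio (j + m)) := by
  induction m with
  | zero => exact hg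
  | succ m ih =>
    rw [iterate_succ_apply', ← cauchyProduct_zero_right (M := M) f, ← add_assoc]
    exact cauchyProduct_eqOn_right hf ih

lemma iterate_cauchyProduct_apply_of_lt {f : ℕ → A} (hf : f 0 = 0) (g : ℕ → A) {D k : ℕ}
    (hD : D < k) : (cauchyProduct M f)^[k] g D = 0 :=
  iterate_cauchyProduct_eqOn_zero (j := 0) hf (by simp) k (by simpa using hD)

lemma iterate_cauchyProduct_apply_zero {f g : ℕ → A} (hf : f 0 = 0) (hg : g 0 = 0) (m : ℕ) :
    (cauchyProduct M f)^[m] g 0 = 0 :=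
  iterate_cauchyProduct_eqOn_zero (j := 1) hf (fun _ hi => by simp_all) m (by simp)

lemma iterate_cauchyProduct_self_eqOn {f f' : ℕ → A} {j : ℕ} (hf : f 0 = 0) (hf' : f' 0 = 0)
    (h : Set.EqOn f f' (Set.Iio j)) (m : ℕ) :
    Set.EqOn ((cauchyProduct M f)^[m + 1] f) ((cauchyProduct M f')^[m + 1] f')
      (Set.Iio (j + 1)) := by
  have hj : ∀ m, Set.EqOn ((cauchyProduct M f)^[m] f) ((cauchyProduct M f')^[m] f')
      (Set.Iio j) := by
    intro m
    induction m with
    | zero => exact h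
    | succ m ih =>
      rw [iterate_succ_apply', iterate_succ_apply']
      exact (cauchyProduct_eqOn hf (iterate_cauchyProduct_apply_zero hf' hf' m) h ih).mono
        (Set.Iio_subset_Iio (Nat.le_succ j))
  rw [iterate_succ_apply', iterate_succ_apply']
  exact cauchyProduct_eqOn hf (iterate_cauchyProduct_apply_zero hf' hf' m) h (hj m)

lemma sum_comp_iterate_cauchyProduct_apply_zero {f : ℕ → A} (hf : f 0 = 0) {φ : ℕ → A →+ A}
    {K : Finset ℕ} (hK : ∀ k ∈ K, 1 ≤ k) (g : ℕ → A) :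
    (∑ k ∈ K, φ k ∘ (cauchyProduct M f)^[k] g) 0 = 0 := by
  simp only [Finset.sum_apply, comp_apply]
  exact sum_eq_zero fun k hk => by
    rw [iterate_cauchyProduct_apply_of_lt hf g (hK k hk), map_zero]

lemma sum_comp_iterate_cauchyProduct_apply_one {f : ℕ → A} (hf : f 0 = 0) {φ : ℕ → A →+ A}
    {K : Finset ℕ} (hK : ∀ k ∈ K, 2 ≤ k) (y : A) :
    (∑ k ∈ insert 1 K, φ k ∘ (cauchyProduct M f)^[k] (Pi.single 0 y)) 1 = φ 1 (M (f 1) y) := by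
  have hK1 : ∀ k ∈ K, φ k ((cauchyProduct M f)^[k] (Pi.single 0 y) 1) = 0 := fun k hk => by
    rw [iterate_cauchyProduct_apply_of_lt hf _ (hK k hk), map_zero]
  simp only [Finset.sum_apply, comp_apply, sum_insert (show 1 ∉ K from fun h => by
    simpa using hK 1 h), sum_eq_zero hK1, add_zero, iterate_one,
    cauchyProduct_single_zero_apply_one hf]

lemma sum_iterate_truncEval_eq {s N : ℕ} (hs : ∀ z : A, s ^ N • z = 0) (hN : 0 < N)
    (φ : ℕ → A →+ A) (K : Finset ℕ) (f : ℕ → A) (y : A) :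
    ∑ k ∈ K, φ k ((M (truncEval s N f))^[k] y)
      = truncEval s N (∑ k ∈ K, φ k ∘ (cauchyProduct M f)^[k] (Pi.single 0 y)) := by
  simp only [map_sum, truncEval_comp, ← truncEval_iterate_cauchyProduct hs,
    truncEval_single hN, pow_zero, one_smul]

variable (M) (φ : ℕ → A →+ A) (K : Finset ℕ) (c : ℕ → A)

/-- With `W a = a + Σ_{k ∈ K} φ k (L_a^(k-1) a)`, a fixed point `g` solves `W g = c`. For
`k ≥ 2` the coefficients of `L_g^(k-1) g` in degrees `≤ j` only involve those of `g` in
degrees `< j`, so each step fixes one more coefficient. -/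
def omegaStep (g : ℕ → A) : ℕ → A :=
  c - ∑ k ∈ K, φ k ∘ (cauchyProduct M g)^[k - 1] g

def omegaSeries (N : ℕ) : ℕ → A :=
  (omegaStep M φ K c)^[N] 0

variable {M φ K c}

lemma omegaStep_apply_zero (hc : c 0 = 0) {g : ℕ → A} (hg : g 0 = 0) :
    omegaStep M φ K c g 0 = 0 := by
  simp [omegaStep, Finset.sum_apply, hc, iterate_cauchyProduct_apply_zero hg hg]

lemma omegaStep_eqOn (hK : ∀ k ∈ K, 2 ≤ k) {g g' : ℕ → A} {j : ℕ} (hg : g 0 = 0)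
    (hg' : g' 0 = 0) (h : Set.EqOn g g' (Set.Iio j)) :
    Set.EqOn (omegaStep M φ K c g) (omegaStep M φ K c g') (Set.Iio (j + 1)) := by
  intro D hD
  simp only [omegaStep, Pi.sub_apply, Finset.sum_apply, comp_apply]
  congr 1
  refine sum_congr rfl fun k hk => ?_
  obtain ⟨m, hm⟩ : ∃ m, k - 1 = m + 1 := ⟨k - 2, by have := hK k hk; omega⟩
  rw [hm, iterate_cauchyProduct_self_eqOn hg hg' h m hD]

lemma iterate_omegaStep_apply_zero (hc : c 0 = 0) {g : ℕ → A} (hg : g 0 = 0) (j : ℕ) :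
    (omegaStep M φ K c)^[j] g 0 = 0 := by
  induction j with
  | zero => exact hg
  | succ j ih =>
    rw [iterate_succ_apply']
    exact omegaStep_apply_zero hc ih

lemma iterate_omegaStep_eqOn (hc : c 0 = 0) (hK : ∀ k ∈ K, 2 ≤ k) (j : ℕ) :
    ∀ {g g' : ℕ → A}, g 0 = 0 → g' 0 = 0 →
      Set.EqOn ((omegaStep M φ K c)^[j] g) ((omegaStep M φ K c)^[j] g') (Set.Iio j) := by
  induction j with
  | zero => intro g g' _ _ D hD; simp at hD
  | succ j ih =>
    intro g g' hg hg'
    rw [iterate_succ_apply', iterate_succ_apply']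
    exact omegaStep_eqOn hK (iterate_omegaStep_apply_zero hc hg j)
      (iterate_omegaStep_apply_zero hc hg' j) (ih hg hg')

lemma omegaSeries_apply_zero (hc : c 0 = 0) (N : ℕ) : omegaSeries M φ K c N 0 = 0 :=
  iterate_omegaStep_apply_zero hc rfl N

lemma omegaStep_omegaSeries_eqOn (hc : c 0 = 0) (hK : ∀ k ∈ K, 2 ≤ k) (N : ℕ) :
    Set.EqOn (omegaStep M φ K c (omegaSeries M φ K c N)) (omegaSeries M φ K c N)
      (Set.Iio N) := by
  rw [omegaSeries, ← iterate_succ_apply' (omegaStep M φ K c), iterate_succ_apply]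
  exact iterate_omegaStep_eqOn hc hK N (omegaStep_apply_zero hc rfl) rfl

lemma omegaSeries_apply_one (hc : c 0 = 0) (hK : ∀ k ∈ K, 2 ≤ k) {N : ℕ} (hN : 1 < N) :
    omegaSeries M φ K c N 1 = c 1 := by
  rw [← omegaStep_omegaSeries_eqOn hc hK N hN]
  simp only [omegaStep, Pi.sub_apply, Finset.sum_apply, comp_apply, sub_eq_self]
  refine sum_eq_zero fun k hk => ?_
  have hk := hK k hk
  rw [iterate_cauchyProduct_eqOn_zero (j := 1) (omegaSeries_apply_zero hc N)
    (fun _ hi => by simp_all [omegaSeries_apply_zero hc N]) (k - 1) (by simp; omega),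
    Pi.zero_apply, map_zero]

lemma truncEval_omegaSeries {s N : ℕ} (hs : ∀ z : A, s ^ N • z = 0) (hc : c 0 = 0)
    (hK : ∀ k ∈ K, 2 ≤ k) :
    truncEval s N (omegaSeries M φ K c N)
      + ∑ k ∈ K, φ k ((M (truncEval s N (omegaSeries M φ K c N)))^[k - 1]
        (truncEval s N (omegaSeries M φ K c N))) = truncEval s N c := by
  have hfix := truncEval_congr (s := s) (omegaStep_omegaSeries_eqOn (M := M) (φ := φ) hc hK N)
  simp only [omegaStep, map_sub, map_sum, truncEval_comp,
    ← truncEval_iterate_cauchyProduct hs] at hfix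
  exact eq_sub_iff_add_eq.1 hfix.symm

lemma apply_truncEval_eq_omegaSeries [Fintype A] {W Ω : A → A} (hΩ : LeftInverse W Ω)
    (hW : ∀ a, W a = a + ∑ k ∈ K, φ k ((M a)^[k - 1] a)) {s N : ℕ}
    (hs : ∀ z : A, s ^ N • z = 0) (hc : c 0 = 0) (hK : ∀ k ∈ K, 2 ≤ k) :
    Ω (truncEval s N c) = truncEval s N (omegaSeries M φ K c N) := by
  rw [← hΩ.rightInverse_of_card_le le_rfl (truncEval s N (omegaSeries M φ K c N)), hW,
    truncEval_omegaSeries hs hc hK]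

end CoefficientSequences

section RootsOfUnity

lemma nsmul_eq_nsmul_of_natCast_eq {Q : Type*} [AddCommGroup Q] {m a b : ℕ}
    (hQ : ∀ q : Q, m • q = 0) (h : (a : ZMod m) = b) (q : Q) : a • q = b • q := by
  let := AddCommGroup.zmodModule hQ
  rw [← Nat.cast_smul_eq_nsmul (ZMod m), h, Nat.cast_smul_eq_nsmul]

lemma eq_nsmul_of_nsmul_eq {Q : Type*} [AddCommGroup Q] {m c : ℕ} [NeZero m]
    (hQ : ∀ q : Q, m • q = 0) (hc : c.Coprime m) {a b : Q} (h : c • b = a) :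
    b = ((c : ZMod m)⁻¹).val • a := by
  have hcu : ((c * ((c : ZMod m)⁻¹).val : ℕ) : ZMod m) = ((1 : ℕ) : ZMod m) := by
    rw [Nat.cast_mul, ZMod.natCast_zmod_val, ZMod.coe_mul_inv_eq_one c hc, Nat.cast_one]
  rw [← h, ← mul_smul, mul_comm, nsmul_eq_nsmul_of_natCast_eq hQ hcu, one_smul]

lemma geom_sum_eq_zero_of_pow_eq_one {R : Type*} [CommRing R] {ω : R} {L : ℕ} (h : ω ^ L = 1)
    (hu : IsUnit (ω - 1)) : ∑ i ∈ range L, ω ^ i = 0 := by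
  have := geom_sum_mul ω L
  rwa [h, sub_self, hu.mul_left_eq_zero] at this

lemma sum_pow_mul_pow_succ_eq {R : Type*} [CommRing R] {ζ : R} {L : ℕ} (h : ζ ^ L = 1) (D : ℕ) :
    ∑ i ∈ range L, ζ ^ (L - i) * (ζ ^ i) ^ (D + 1) = ∑ i ∈ range L, (ζ ^ D) ^ i := by
  refine sum_congr rfl fun i hi => ?_
  have hi := (mem_range.1 hi).le
  rw [← pow_mul, ← pow_mul, ← pow_add, show L - i + i * (D + 1) = L + D * i by
    rw [mul_add_one, mul_comm D i]; omega, pow_add, h, one_mul]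

lemma sum_pow_smul_sum_pow_smul_eq {Q : Type*} [AddCommGroup Q] {m ξ L N : ℕ}
    (hQ : ∀ q : Q, m • q = 0) (hξ : (ξ : ZMod m) ^ L = 1)
    (hunit : ∀ j, 0 < j → j < N - 1 → IsUnit ((ξ : ZMod m) ^ j - 1)) (hN : 1 < N)
    (q : ℕ → Q) (hq : q 0 = 0) :
    ∑ i ∈ range L, ξ ^ (L - i) • ∑ D ∈ range N, (ξ ^ i) ^ D • q D = L • q 1 := by
  have hcoeff : ∀ D ∈ range N,
      (∑ i ∈ range L, ξ ^ (L - i) * (ξ ^ i) ^ D) • q D = if D = 1 then L • q 1 else 0 := by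
    intro D hD
    rcases D with _ | D
    · simp [hq]
    rcases eq_or_ne D 0 with rfl | hD0
    · have hL : ((∑ i ∈ range L, ξ ^ (L - i) * (ξ ^ i) ^ (0 + 1) : ℕ) : ZMod m) = L := by
        push_cast
        rw [sum_pow_mul_pow_succ_eq hξ 0]
        simp
      rw [nsmul_eq_nsmul_of_natCast_eq hQ hL, if_pos rfl]
    · have h0 : ((∑ i ∈ range L, ξ ^ (L - i) * (ξ ^ i) ^ (D + 1) : ℕ) : ZMod m)
          = ((0 : ℕ) : ZMod m) := by
        push_cast
        rw [sum_pow_mul_pow_succ_eq hξ]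
        refine geom_sum_eq_zero_of_pow_eq_one ?_ (hunit D (Nat.pos_of_ne_zero hD0) ?_)
        · rw [← pow_mul, mul_comm, pow_mul, hξ, one_pow]
        · have := mem_range.1 hD
          omega
      simp [nsmul_eq_nsmul_of_natCast_eq hQ h0, hD0]
  simp only [smul_sum, smul_smul]
  rw [sum_comm, ← sum_congr rfl fun D _ => sum_smul .., sum_congr rfl hcoeff, sum_ite_eq',
    if_pos (mem_range.2 hN)]

lemma ZMod.isUnit_of_castHom_ne_zero {p d : ℕ} (hp : p.Prime) (hd : 0 < d) {x : ZMod (p ^ d)}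
    (h : ZMod.castHom (dvd_pow_self p hd.ne') (ZMod p) x ≠ 0) : IsUnit x := by
  have : NeZero (p ^ d) := ⟨pow_ne_zero d hp.ne_zero⟩
  rw [← ZMod.natCast_zmod_val x, ZMod.isUnit_natCast_iff_not_dvd_pow hp hd,
    ← ZMod.natCast_eq_zero_iff]
  rwa [ZMod.castHom_apply, ZMod.cast_eq_val] at h

lemma isUnit_of_forall_units_eq_pow {m γ : ℕ} [Fact (2 < m)]
    (hγ : ∀ u : (ZMod m)ˣ, ∃ k : ℕ, (γ : ZMod m) ^ k = u) : IsUnit (γ : ZMod m) := by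
  obtain ⟨k, hk⟩ := hγ (-1)
  have hk0 : k ≠ 0 := by
    rintro rfl
    exact ZMod.neg_one_ne_one (by simpa using hk.symm)
  exact (isUnit_pow_iff hk0).1 (hk ▸ (-1 : (ZMod m)ˣ).isUnit)

lemma forall_units_eq_pow_of_dvd {m n γ : ℕ} [NeZero m] (h : n ∣ m)
    (hγ : ∀ u : (ZMod m)ˣ, ∃ k : ℕ, (γ : ZMod m) ^ k = u) :
    ∀ v : (ZMod n)ˣ, ∃ k : ℕ, (γ : ZMod n) ^ k = v := by
  intro v
  obtain ⟨u, rfl⟩ := ZMod.unitsMap_surjective h v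
  obtain ⟨k, hk⟩ := hγ u
  refine ⟨k, ?_⟩
  rw [ZMod.unitsMap_def, Units.coe_map, ← hk, MonoidHom.coe_coe, map_pow, map_natCast]

lemma pow_ne_one_of_forall_units_eq_pow {p γ : ℕ} [Fact p.Prime]
    (hγ : ∀ u : (ZMod p)ˣ, ∃ k : ℕ, (γ : ZMod p) ^ k = u) (hγu : IsUnit (γ : ZMod p)) {j : ℕ}
    (hj0 : 0 < j) (hj : j < p - 1) : (γ : ZMod p) ^ j ≠ 1 := by
  obtain ⟨g, hg⟩ := hγu
  have hgen : ∀ v, v ∈ Subgroup.zpowers g := fun v => by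
    obtain ⟨k, hk⟩ := hγ v
    exact ⟨k, Units.ext (by simp [hg, hk])⟩
  rw [← hg, ← Units.val_pow_eq_pow_val, Ne, Units.val_eq_one]
  refine pow_ne_one_of_lt_orderOf hj0.ne' ?_
  rwa [orderOf_eq_card_of_forall_mem_zpowers hgen, Nat.card_eq_fintype_card, ZMod.card_units]

variable {p γ : ℕ}

lemma pow_prime_pow_pow_eq_one (hp : p.Prime)
    (hγ : ∀ u : (ZMod (p ^ p))ˣ, ∃ k : ℕ, (γ : ZMod (p ^ p)) ^ k = u) :
    ((γ ^ p ^ (p - 1) : ℕ) : ZMod (p ^ p)) ^ (p - 1) = 1 := by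
  have : Fact (2 < p ^ p) := ⟨hp.two_le.trans_lt (Nat.lt_pow_self hp.one_lt)⟩
  obtain ⟨u, hu⟩ := isUnit_of_forall_units_eq_pow hγ
  rw [Nat.cast_pow, ← pow_mul, ← hu, ← Units.val_pow_eq_pow_val,
    ← Nat.totient_prime_pow hp hp.pos, ZMod.pow_totient, Units.val_one]

lemma isUnit_pow_prime_pow_pow_sub_one (hp : p.Prime)
    (hγ : ∀ u : (ZMod (p ^ p))ˣ, ∃ k : ℕ, (γ : ZMod (p ^ p)) ^ k = u) {j : ℕ} (hj0 : 0 < j)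
    (hj : j < p - 1) : IsUnit (((γ ^ p ^ (p - 1) : ℕ) : ZMod (p ^ p)) ^ j - 1) := by
  have : Fact p.Prime := ⟨hp⟩
  have : Fact (2 < p ^ p) := ⟨hp.two_le.trans_lt (Nat.lt_pow_self hp.one_lt)⟩
  have hγp := forall_units_eq_pow_of_dvd (dvd_pow_self p hp.ne_zero) hγ
  have hγu : IsUnit (γ : ZMod p) := by
    simpa using (isUnit_of_forall_units_eq_pow hγ).map
      (ZMod.castHom (dvd_pow_self p hp.ne_zero) (ZMod p))
  refine ZMod.isUnit_of_castHom_ne_zero hp hp.pos ?_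
  rw [map_sub, map_pow, map_natCast, map_one, Nat.cast_pow, ZMod.pow_card_pow, sub_ne_zero]
  exact pow_ne_one_of_forall_units_eq_pow hγp hγu hj0 hj

end RootsOfUnity

section GroupOfFlows

variable {A : Type*} [AddCommGroup A]

lemma exists_star_smul_eq_truncEval {p n : ℕ} (hp : p.Prime) (hcard : Nat.card A = p ^ n)
    {mul : A → A → A}
    (hdistl : ∀ x y z : A, mul (x + y) z = mul x z + mul y z)
    (hdistr : ∀ x y z : A, mul x (y + z) = mul x y + mul x z)
    (B : LeftBrace A) {Ω : A → A} {invf : ℕ → A → A}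
    (hinvf : ∀ k : ℕ, k < p → ∀ x : A, (Nat.factorial k) • invf k x = x)
    (hΩ : ∀ a : A, ∑ k ∈ Icc 1 (p - 1), invf k ((fun y => mul (Ω a) y)^[k - 1] (Ω a)) = a)
    (hcirc : ∀ a b : A, B.circ a b =
      a + b + ∑ k ∈ Icc 1 (p - 1), invf k ((fun y => mul (Ω a) y)^[k] b))
    (x y : A) :
    ∃ r : ℕ → A, r 0 = 0 ∧ r 1 = mul x y ∧
      ∀ s : ℕ, (∀ z : A, s ^ p • z = 0) → B.star (s • x) y = truncEval s p r := by
  have : Fintype A :=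
    @Fintype.ofFinite A (Nat.finite_of_card_ne_zero (by simp [hcard, hp.ne_zero]))
  have : NeZero (p ^ n) := ⟨pow_ne_zero n hp.ne_zero⟩
  have hkill : ∀ a : A, p ^ n • a = 0 := fun a => by rw [← hcard]; exact card_nsmul_eq_zero'
  let M : A →+ A →+ A :=
    AddMonoidHom.mk' (fun a => AddMonoidHom.mk' (mul a) (hdistr a))
      fun a b => AddMonoidHom.ext (hdistl a b)
  let φ : ℕ → A →+ A := fun k => ((k.factorial : ZMod (p ^ n))⁻¹).val • AddMonoidHom.id A
  have hφ : ∀ k, k < p → ∀ a, invf k a = φ k a := fun k hk a =>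
    eq_nsmul_of_nsmul_eq hkill (Nat.Coprime.pow_right n ((Nat.coprime_comm.1 <|
      (hp.coprime_iff_not_dvd).2 fun h => by rw [hp.dvd_factorial] at h; omega))) (hinvf k hk a)
  have hφ1 : ∀ a, φ 1 a = a := fun a => by simpa [hφ 1 hp.one_lt] using hinvf 1 hp.one_lt a
  have hsplit : Icc 1 (p - 1) = insert 1 (Icc 2 (p - 1)) :=
    (insert_Icc_add_one_left_eq_Icc (by have := hp.two_le; omega)).symm
  have hK : ∀ k ∈ Icc 2 (p - 1), 2 ≤ k := fun k hk => (mem_Icc.1 hk).1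
  have hW : ∀ a, ∑ k ∈ Icc 1 (p - 1), invf k ((fun y => mul a y)^[k - 1] a)
      = a + ∑ k ∈ Icc 2 (p - 1), φ k ((M a)^[k - 1] a) := fun a => by
    rw [hsplit, sum_insert (by simp), hφ 1 hp.one_lt, hφ1]
    exact congrArg _ (sum_congr rfl fun k hk => hφ k (by simp at hk; omega) _)
  set f := omegaSeries M φ (Icc 2 (p - 1)) (Pi.single 1 x) p
  have hf0 : f 0 = 0 := omegaSeries_apply_zero (by simp) p
  have hf1 : f 1 = x := by
    simpa using omegaSeries_apply_one (M := M) (φ := φ) (c := Pi.single 1 x) (by simp) hK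
      hp.one_lt
  refine ⟨∑ k ∈ Icc 1 (p - 1), φ k ∘ (cauchyProduct M f)^[k] (Pi.single 0 y),
    sum_comp_iterate_cauchyProduct_apply_zero hf0 (fun k hk => (mem_Icc.1 hk).1) _, ?_,
    fun s hs => ?_⟩
  · rw [hsplit, sum_comp_iterate_cauchyProduct_apply_one hf0 hK, hφ1, hf1]
    rfl
  · have hΩs : Ω (s • x) = truncEval s p f := by
      simpa [truncEval_single hp.one_lt] using
        apply_truncEval_eq_omegaSeries (W := fun a => ∑ k ∈ Icc 1 (p - 1),
          invf k ((fun y => mul a y)^[k - 1] a)) (c := Pi.single 1 x) hΩ hW hs (by simp) hK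
    rw [LeftBrace.star, hcirc, add_assoc, add_sub_cancel_left, add_sub_cancel_left, hΩs,
      ← sum_iterate_truncEval_eq hs hp.pos]
    exact sum_congr rfl fun k hk => hφ k (by simp at hk; omega) _

lemma odot_qmk_eq_sum {p : ℕ} {B : LeftBrace A}
    {odot : (A ⧸ annSub A (p ^ 2)) → (A ⧸ annSub A (p ^ 2)) → (A ⧸ annSub A (p ^ 2))}
    (hodot : ∀ a b c : A, p • c = B.star (p • a) b →
      odot (qmk (p ^ 2) a) (qmk (p ^ 2) b) = qmk (p ^ 2) c)
    {x y : A} {t : ℕ} {r : ℕ → A} (hr : r 0 = 0)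
    (hstar : B.star (p • t • x) y = truncEval (p * t) p r) :
    odot (qmk (p ^ 2) (t • x)) (qmk (p ^ 2) y)
      = ∑ D ∈ range p, t ^ D • qmk (p ^ 2) (p ^ (D - 1) • r D) := by
  have hc : p • ∑ D ∈ range p, (t ^ D * p ^ (D - 1)) • r D = B.star (p • t • x) y := by
    rw [hstar, truncEval_apply, smul_sum]
    refine sum_congr rfl fun D _ => ?_
    rcases D with _ | D
    · simp [hr]
    · rw [smul_smul, Nat.add_sub_cancel]
      ring_nf
  rw [hodot _ _ _ hc]
  simp only [qmk, ← QuotientAddGroup.mk'_apply, map_sum, mul_smul, map_nsmul]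

end GroupOfFlows

theorem stmt_11_general (p n : ℕ) (hp : p.Prime) (hn : n < p - 1)
    (A : Type u) [AddCommGroup A] (hcard : Nat.card A = p ^ n)
    (mul : A → A → A)
    -- mul is a pre-Lie ring multiplication
    (hdistl : ∀ x y z : A, mul (x + y) z = mul x z + mul y z)
    (hdistr : ∀ x y z : A, mul x (y + z) = mul x y + mul x z)
    -- (A,+,∘) is the group of flows of mul
    (B : LeftBrace A) (Ω : A → A) (invf : ℕ → A → A)
    (hinvf : ∀ k : ℕ, k < p → ∀ x : A, (Nat.factorial k) • invf k x = x)
    (hΩ : ∀ a : A,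
      ∑ k ∈ Finset.Icc 1 (p - 1), invf k ((fun y => mul (Ω a) y)^[k - 1] (Ω a)) = a)
    (hcirc : ∀ a b : A, B.circ a b =
      a + b + ∑ k ∈ Finset.Icc 1 (p - 1), invf k ((fun y => mul (Ω a) y)^[k] b))
    -- the operations ⊙ and • constructed from the brace B
    (γ : ℕ)
    (hγ : ∀ u : (ZMod (p ^ p))ˣ, ∃ k : ℕ, (γ : ZMod (p ^ p)) ^ k = (u : ZMod (p ^ p)))
    (odot bullet :
      (A ⧸ annSub A (p ^ 2)) → (A ⧸ annSub A (p ^ 2)) → (A ⧸ annSub A (p ^ 2)))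
    (hodot : ∀ a b c : A, p • c = B.star (p • a) b →
      odot (qmk (p ^ 2) a) (qmk (p ^ 2) b) = qmk (p ^ 2) c)
    (hbull : ∀ x y : A, bullet (qmk (p ^ 2) x) (qmk (p ^ 2) y) =
      ∑ i ∈ Finset.range (p - 1), (γ ^ (p ^ (p - 1))) ^ (p - 1 - i) •
        odot (qmk (p ^ 2) ((γ ^ (p ^ (p - 1))) ^ i • x)) (qmk (p ^ 2) y)) :
    ∀ x y : A,
      bullet (qmk (p ^ 2) x) (qmk (p ^ 2) y) = (p - 1) • qmk (p ^ 2) (mul x y) := by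
  intro x y
  have hkill : ∀ a : A, p ^ p • a = 0 := fun a => by
    obtain ⟨c, hc⟩ := pow_dvd_pow p (show n ≤ p by omega)
    rw [hc, mul_comm, mul_smul, ← hcard, card_nsmul_eq_zero', smul_zero]
  have hQ : ∀ q : A ⧸ annSub A (p ^ 2), p ^ p • q = 0 := fun q => by
    induction q using QuotientAddGroup.induction_on with
    | H a => rw [← QuotientAddGroup.mk_nsmul, hkill, QuotientAddGroup.mk_zero]
  obtain ⟨r, hr0, hr1, hstar⟩ :=
    exists_star_smul_eq_truncEval hp hcard hdistl hdistr B hinvf hΩ hcirc x y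
  have hodot' : ∀ t : ℕ, odot (qmk (p ^ 2) (t • x)) (qmk (p ^ 2) y)
      = ∑ D ∈ range p, t ^ D • qmk (p ^ 2) (p ^ (D - 1) • r D) := fun t =>
    odot_qmk_eq_sum hodot hr0 (by
      rw [← mul_smul]
      exact hstar _ fun z => by rw [mul_pow, mul_comm, mul_smul, hkill, smul_zero])
  rw [hbull, sum_congr rfl fun i _ => by rw [hodot'],
    sum_pow_smul_sum_pow_smul_eq hQ (pow_prime_pow_pow_eq_one hp hγ)
      (fun j hj0 hj => isUnit_pow_prime_pow_pow_sub_one hp hγ hj0 (by omega)) hp.one_lt _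
      (by simp [hr0, qmk])]
  simp [hr1, qmk]

/-- if `(A,+,mul)` is a left nilpotent pre-Lie ring of cardinality `p^n`
(`n < p−1`) and `(A,+,∘)` is its group of flows, then the operation `•` on `A/ann(p²)`
constructed from this brace via `⊙` and `ξ = γ^(p^(p−1))` satisfies
`[x]•[y] = (p−1)·[x·y]`. -/
theorem stmt_11 (p n : ℕ) (hp : p.Prime) (hn : n < p - 1)
    (A : Type u) [AddCommGroup A] (hcard : Nat.card A = p ^ n)
    (mul : A → A → A)
    -- mul is a pre-Lie ring multiplication
    (hdistl : ∀ x y z : A, mul (x + y) z = mul x z + mul y z)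
    (hdistr : ∀ x y z : A, mul x (y + z) = mul x y + mul x z)
    (hpre : ∀ x y z : A,
      mul (mul x y) z - mul x (mul y z) = mul (mul y x) z - mul y (mul x z))
    -- mul is left nilpotent
    (hnil : ∃ m : ℕ, ∀ (l : List A) (b : A), l.length = m → leftProd mul l b = 0)
    -- (A,+,∘) is the group of flows of mul
    (B : LeftBrace A) (Ω : A → A) (invf : ℕ → A → A)
    (hinvf : ∀ k : ℕ, k < p → ∀ x : A, (Nat.factorial k) • invf k x = x)
    (hΩ : ∀ a : A,
      ∑ k ∈ Finset.Icc 1 (p - 1), invf k ((fun y => mul (Ω a) y)^[k - 1] (Ω a)) = a)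
    (hcirc : ∀ a b : A, B.circ a b =
      a + b + ∑ k ∈ Finset.Icc 1 (p - 1), invf k ((fun y => mul (Ω a) y)^[k] b))
    -- the operations ⊙ and • constructed from the brace B
    (γ : ℕ)
    (hγ : ∀ u : (ZMod (p ^ p))ˣ, ∃ k : ℕ, (γ : ZMod (p ^ p)) ^ k = (u : ZMod (p ^ p)))
    (odot bullet :
      (A ⧸ annSub A (p ^ 2)) → (A ⧸ annSub A (p ^ 2)) → (A ⧸ annSub A (p ^ 2)))
    (hodot : ∀ a b c : A, p • c = B.star (p • a) b →
      odot (qmk (p ^ 2) a) (qmk (p ^ 2) b) = qmk (p ^ 2) c)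
    (hbull : ∀ x y : A, bullet (qmk (p ^ 2) x) (qmk (p ^ 2) y) =
      ∑ i ∈ Finset.range (p - 1), (γ ^ (p ^ (p - 1))) ^ (p - 1 - i) •
        odot (qmk (p ^ 2) ((γ ^ (p ^ (p - 1))) ^ i • x)) (qmk (p ^ 2) y)) :
    ∀ x y : A,
      bullet (qmk (p ^ 2) x) (qmk (p ^ 2) y) = (p - 1) • qmk (p ^ 2) (mul x y) :=
  stmt_11_general p n hp hn A hcard mul hdistl hdistr B Ω invf hinvf hΩ hcirc γ hγ odot bullet hodot
    hbull
end

section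
/- Let A be a left brace, a, b ∈ A, and n a positive integer, and let a^{∘n} denote the product of n copies of a under ∘. Then a^{∘n}*b = Σ_{i=1}^{n} C(n,i)·e_i, where e_1 = a*b and e_{i+1} = a*e_i; moreover a^{∘n} = Σ_{i=1}^{n} C(n,i)·a_i, where a_1 = a and a_{i+1} = a*a_i. -/
universe u

section AuxLemmas

variable {A : Type u} [AddCommGroup A] (B : LeftBrace A)

lemma lb_circ_zero (a : A) : B.circ a 0 = a := by
  have h := B.circ_add a 0 0
  rw [add_zero] at h
  exact (add_left_cancel h).symm

lemma lb_circ_add' (a x y : A) : B.circ a (x + y) = B.circ a x + B.circ a y - a := by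
  have h := B.circ_add a x y
  rw [← h]; abel

lemma lb_circ_sub (a x y : A) : B.circ a (x - y) = B.circ a x - B.circ a y + a := by
  have h := lb_circ_add' B a (x - y) y
  rw [sub_add_cancel] at h
  rw [h]; abel

lemma lb_star_add (a x y : A) : B.star a (x + y) = B.star a x + B.star a y := by
  unfold LeftBrace.star
  rw [lb_circ_add']; abel

lemma lb_star_zero (a : A) : B.star a 0 = 0 := by
  unfold LeftBrace.star
  rw [lb_circ_zero]; abel

/-- Left multiplication by `a` under `*` as an additive homomorphism. -/
def lb_starHom (a : A) : A →+ A :=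
  { toFun := B.star a
    map_zero' := lb_star_zero B a
    map_add' := lb_star_add B a }

lemma lb_star_circ (a x c : A) :
    B.star (B.circ a x) c = B.star a (B.star x c) + B.star a c + B.star x c := by
  unfold LeftBrace.star
  rw [B.circ_assoc]
  rw [show B.circ x c - x - c = (B.circ x c - x) - c by abel]
  rw [lb_circ_sub, lb_circ_sub]
  abel

lemma lb_circ_eq_star (a x : A) : B.circ a x = B.star a x + a + x := by
  unfold LeftBrace.star; abel

lemma lb_binom_step {M : Type*} [AddCommMonoid M] (E : ℕ → M) (n : ℕ) :
    ∑ i ∈ Finset.Icc 1 (n + 1), (n + 1).choose i • E (i - 1) =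
      (∑ i ∈ Finset.Icc 1 n, n.choose i • E i) + E 0 +
        ∑ i ∈ Finset.Icc 1 n, n.choose i • E (i - 1) := by
  have hconv : ∀ (m : ℕ) (f : ℕ → M),
      ∑ i ∈ Finset.Icc 1 m, f i = ∑ j ∈ Finset.range m, f (j + 1) := by
    intro m f
    rw [show Finset.Icc 1 m = Finset.Ico 1 (m + 1) by rw [Finset.Ico_add_one_right_eq_Icc],
      Finset.sum_Ico_eq_sum_range]
    simp [add_comm]
  rw [hconv, hconv, hconv]
  simp only [Nat.add_sub_cancel]
  have h1 : ∀ j ∈ Finset.range (n + 1),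
      (n + 1).choose (j + 1) • E j = n.choose j • E j + n.choose (j + 1) • E j := by
    intro j _
    rw [Nat.choose_succ_succ, add_smul]
  rw [Finset.sum_congr rfl h1, Finset.sum_add_distrib]
  rw [Finset.sum_range_succ' (fun j => n.choose j • E j) n]
  rw [Finset.sum_range_succ (fun j => n.choose (j + 1) • E j) n]
  simp [Nat.choose_succ_self]

end AuxLemmas

/-- in any left brace, `a^{∘n}*b = Σ_{i=1}^n C(n,i)·e_i` with `e_1 = a*b`,
`e_{i+1} = a*e_i`, and `a^{∘n} = Σ_{i=1}^n C(n,i)·a_i` with `a_1 = a`, `a_{i+1} = a*a_i`. -/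
theorem stmt_13 (A : Type u) [AddCommGroup A] (B : LeftBrace A) (a b : A)
    (n : ℕ) (hn : 0 < n) :
    B.star (circPow B a n) b = ∑ i ∈ Finset.Icc 1 n, n.choose i • starIter B a b (i - 1) ∧
    circPow B a n = ∑ i ∈ Finset.Icc 1 n, n.choose i • eSeq B a (i - 1) := by
  induction n with
  | zero => omega
  | succ n ih =>
    rcases Nat.eq_zero_or_pos n with h0 | hpos
    · subst h0
      constructor
      · show B.star (B.circ a (circPow B a 0)) b = _
        show B.star (B.circ a B.one) b = _
        rw [B.circ_one]
        simp [starIter]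
      · show B.circ a (circPow B a 0) = _
        show B.circ a B.one = _
        rw [B.circ_one]
        simp [eSeq]
    · obtain ⟨h1, h2⟩ := ih hpos
      have hmap : ∀ (E : ℕ → A) (hE : ∀ k, B.star a (E k) = E (k + 1)),
          B.star a (∑ i ∈ Finset.Icc 1 n, n.choose i • E (i - 1)) =
            ∑ i ∈ Finset.Icc 1 n, n.choose i • E i := by
        intro E hE
        rw [show B.star a (∑ i ∈ Finset.Icc 1 n, n.choose i • E (i - 1)) =
            lb_starHom B a (∑ i ∈ Finset.Icc 1 n, n.choose i • E (i - 1)) from rfl]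
        rw [map_sum]
        refine Finset.sum_congr rfl ?_
        intro i hi
        rw [Finset.mem_Icc] at hi
        rw [AddMonoidHom.map_nsmul]
        rw [show (lb_starHom B a) (E (i - 1)) = B.star a (E (i - 1)) from rfl]
        rw [hE, Nat.sub_add_cancel hi.1]
      constructor
      · show B.star (B.circ a (circPow B a n)) b = _
        rw [lb_star_circ, h1]
        rw [hmap (starIter B a b) (fun k => rfl)]
        rw [lb_binom_step (starIter B a b) n]
        have hs : starIter B a b 0 = B.star a b := rfl
        rw [hs]
      · show B.circ a (circPow B a n) = _
        rw [lb_circ_eq_star, h2]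
        rw [hmap (eSeq B a) (fun k => rfl)]
        rw [lb_binom_step (eSeq B a) n]
        have hs : eSeq B a 0 = a := rfl
        rw [hs]
end
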